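/- arXiv:2305.06283 — 4 statements merged into one kernel-verified Lean document; each statement's English description precedes it below -/
import Mathlib

section
/- Every nonzero codeword of the extended binary Golay code has Hamming weight 8, 12, 16, or 24; in particular the minimum distance of the code is 8. -/
/-- The 12 rows of Leech's generator matrix C for the extended binary Golay code. -/
def golayRowsList : List (List ℕ) :=
  [[1,0,0,0,0,0,0,0,0,0,0,0, 0,1,1,1,1,1,1,1,1,1,1,1],
   [0,1,0,0,0,0,0,0,0,0,0,0, 1,1,0,1,0,0,0,1,1,1,0,1],
   [0,0,1,0,0,0,0,0,0,0,0,0, 1,0,1,0,0,0,1,1,1,0,1,1],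
   [0,0,0,1,0,0,0,0,0,0,0,0, 1,1,0,0,0,1,1,1,0,1,1,0],
   [0,0,0,0,1,0,0,0,0,0,0,0, 1,0,0,0,1,1,1,0,1,1,0,1],
   [0,0,0,0,0,1,0,0,0,0,0,0, 1,0,0,1,1,1,0,1,1,0,1,0],
   [0,0,0,0,0,0,1,0,0,0,0,0, 1,0,1,1,1,0,1,1,0,1,0,0],
   [0,0,0,0,0,0,0,1,0,0,0,0, 1,1,1,1,0,1,1,0,1,0,0,0],
   [0,0,0,0,0,0,0,0,1,0,0,0, 1,1,1,0,1,1,0,1,0,0,0,1],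
   [0,0,0,0,0,0,0,0,0,1,0,0, 1,1,0,1,1,0,1,0,0,0,1,1],
   [0,0,0,0,0,0,0,0,0,0,1,0, 1,0,1,1,0,1,0,0,0,1,1,1],
   [0,0,0,0,0,0,0,0,0,0,0,1, 1,1,1,0,1,0,0,0,1,1,1,0]]

def golayRow (i : Fin 12) : Fin 24 → ZMod 2 :=
  fun j => (((golayRowsList.getD i.val []).getD j.val 0 : ℕ) : ZMod 2)

/-- The extended binary Golay code: the span over F_2 of the rows of C. -/
def GolayCode : Submodule (ZMod 2) (Fin 24 → ZMod 2) :=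
  Submodule.span (ZMod 2) (Set.range golayRow)

/-- Hamming weight of a binary word of length 24. -/
def hWeight (x : Fin 24 → ZMod 2) : ℕ :=
  (Finset.univ.filter fun j => x j ≠ 0).card

/-- Hamming distance. -/
def hDist (x y : Fin 24 → ZMod 2) : ℕ :=
  (Finset.univ.filter fun j => x j ≠ y j).card

/-- Standard integer inner product on Z^24. -/
def innerZ (x y : Fin 24 → ℤ) : ℤ := ∑ i, x i * y i

/-- The (unscaled) Leech lattice. -/
def LeechLattice : Set (Fin 24 → ℤ) :=
  {x | ∃ a : Fin 2, ∃ b ∈ GolayCode, ∃ c : Fin 24 → Fin 2, ∃ d : Fin 24 → ℤ,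
    (∑ i, (c i : ℤ)) % 2 = (a : ℤ) ∧
    ∀ i, x i = (a : ℤ) + 2 * ((b i).val : ℤ) + 4 * ((c i : ℕ) : ℤ) + 8 * d i}

/-- The 196560 minimal vectors of the Leech lattice. -/
def LeechM : Set (Fin 24 → ℤ) := {x ∈ LeechLattice | innerZ x x = 32}

/-- Shape (∓3, ±1^23): signs given by a Golay codeword, one special coordinate p. -/
def Shape1 (x : Fin 24 → ℤ) : Prop :=
  ∃ b ∈ GolayCode, ∃ p : Fin 24,
    ∀ i, x i = if i = p then 6 * (((b i).val : ℕ) : ℤ) - 3 else 1 - 2 * (((b i).val : ℕ) : ℤ)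

/-- Shape (±2^8, 0^16): support a weight-8 Golay codeword, evenly many minus signs. -/
def Shape2 (x : Fin 24 → ℤ) : Prop :=
  ∃ b ∈ GolayCode, hWeight b = 8 ∧
    (∀ i, (b i ≠ 0 → x i = 2 ∨ x i = -2) ∧ (b i = 0 → x i = 0)) ∧
    Even (Finset.univ.filter fun i => x i = -2).card

/-- Shape (±4^2, 0^22). -/
def Shape3 (x : Fin 24 → ℤ) : Prop :=
  ∃ p q : Fin 24, p ≠ q ∧ ∃ s t : ℤ, (s = 4 ∨ s = -4) ∧ (t = 4 ∨ t = -4) ∧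
    ∀ i, x i = if i = p then s else if i = q then t else 0


/-! ### Auxiliary bitmask machinery -/

def gMasks : List ℕ :=
  [16769025, 12103682, 14438404, 7221256, 11997200, 6000672,
   3002432, 1503360, 9138432, 12956160, 14865408, 7436288]

def gAux (l : List ℕ) (n : ℕ) : ℕ :=
  l.foldr (fun i acc => (if n.testBit i then gMasks.getD i 0 else 0) ^^^ acc) 0

def gWord (n : ℕ) : ℕ := gAux (List.range 12) n

def bitv (n : ℕ) : Fin 24 → ZMod 2 := fun j => if (gWord n).testBit j.val then 1 else 0

lemma xor_swap4 (a b c d : ℕ) : (a ^^^ b) ^^^ (c ^^^ d) = (a ^^^ c) ^^^ (b ^^^ d) := by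
  rw [Nat.xor_assoc, ← Nat.xor_assoc b c d, Nat.xor_comm b c, Nat.xor_assoc c b d,
    ← Nat.xor_assoc]

lemma if_xor (b c : Bool) (M : ℕ) :
    (if (b ^^ c) then M else 0) = (if b then M else 0) ^^^ (if c then M else 0) := by
  cases b <;> cases c <;> simp [Nat.xor_self]

lemma gAux_xor (l : List ℕ) (m n : ℕ) : gAux l (m ^^^ n) = gAux l m ^^^ gAux l n := by
  induction l with
  | nil => simp [gAux]
  | cons i l ih =>
    simp only [gAux, List.foldr_cons] at ih ⊢
    rw [ih, Nat.testBit_xor, if_xor, xor_swap4]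

lemma gWord_xor (m n : ℕ) : gWord (m ^^^ n) = gWord m ^^^ gWord n := gAux_xor _ m n

lemma rows_eq : ∀ i : Fin 12, golayRow i = bitv (2 ^ i.val) := by decide

lemma bitv_zero : bitv 0 = 0 := by decide

lemma if_add : ∀ b c : Bool,
    (if b then (1 : ZMod 2) else 0) + (if c then 1 else 0) = if (b ^^ c) then 1 else 0 := by
  decide

lemma bitv_add (m n : ℕ) : bitv m + bitv n = bitv (m ^^^ n) := by
  funext j
  show (if (gWord m).testBit j.val then (1 : ZMod 2) else 0)
      + (if (gWord n).testBit j.val then 1 else 0) = _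
  rw [bitv, gWord_xor, Nat.testBit_xor, if_add _ _]

lemma mem_char : ∀ x ∈ GolayCode, ∃ n < 4096, x = bitv n := by
  intro x hx
  induction hx using Submodule.span_induction with
  | mem x h =>
    obtain ⟨i, rfl⟩ := h
    refine ⟨2 ^ i.val, ?_, rows_eq i⟩
    calc 2 ^ i.val < 2 ^ 12 := Nat.pow_lt_pow_right one_lt_two i.isLt
    _ = 4096 := by norm_num
  | zero => exact ⟨0, by norm_num, bitv_zero.symm⟩
  | add x y hx hy ihx ihy =>
    obtain ⟨m, hm, rfl⟩ := ihx
    obtain ⟨n, hn, rfl⟩ := ihy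
    refine ⟨m ^^^ n, by simpa using Nat.xor_lt_two_pow (n := 12) hm hn, (bitv_add m n)⟩
  | smul r x hx ihx =>
    obtain ⟨n, hn, rfl⟩ := ihx
    rcases (show ∀ r : ZMod 2, r = 0 ∨ r = 1 by decide) r with rfl | rfl
    · exact ⟨0, by norm_num, by rw [zero_smul, bitv_zero]⟩
    · exact ⟨n, hn, by rw [one_smul]⟩

lemma hWeight_bitv (n : ℕ) :
    hWeight (bitv n) = (Finset.univ.filter fun j : Fin 24 => (gWord n).testBit j.val).card := by
  unfold hWeight
  congr 1
  refine Finset.filter_congr fun j _ => ?_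
  unfold bitv
  cases h : (gWord n).testBit j.val <;> simp [h]

lemma weight_zero {x : Fin 24 → ZMod 2} (h : hWeight x = 0) : x = 0 := by
  funext j
  by_contra hj
  have := Finset.card_eq_zero.mp h
  have := Finset.eq_empty_iff_forall_notMem.mp this j
  simp only [Finset.mem_filter, Finset.mem_univ, true_and] at this
  exact this hj

def P (n : ℕ) : Prop :=
    (Finset.univ.filter fun j : Fin 24 => (gWord n).testBit j.val).card = 0 ∨
    (Finset.univ.filter fun j : Fin 24 => (gWord n).testBit j.val).card = 8 ∨
    (Finset.univ.filter fun j : Fin 24 => (gWord n).testBit j.val).card = 12 ∨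
    (Finset.univ.filter fun j : Fin 24 => (gWord n).testBit j.val).card = 16 ∨
    (Finset.univ.filter fun j : Fin 24 => (gWord n).testBit j.val).card = 24

instance (n : ℕ) : Decidable (P n) := by unfold P; infer_instance

set_option maxRecDepth 100000 in
set_option maxHeartbeats 4000000 in
lemma key64 : ∀ a < 64, ∀ b < 64, P (64 * a + b) := by decide

lemma key : ∀ n < 4096, P n := by
  intro n hn
  have h := key64 (n / 64) (by omega) (n % 64) (by omega)
  rwa [show 64 * (n / 64) + n % 64 = n by omega] at h

theorem golay_weights_min_dist :
    (∀ x ∈ GolayCode, x ≠ 0 →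
      hWeight x = 8 ∨ hWeight x = 12 ∨ hWeight x = 16 ∨ hWeight x = 24) ∧
    (∃ x ∈ GolayCode, x ≠ 0 ∧ hWeight x = 8) := by
  constructor
  · intro x hx hne
    obtain ⟨n, hn, rfl⟩ := mem_char x hx
    have h := key n hn
    unfold P at h
    rw [← hWeight_bitv] at h
    rcases h with h | h | h | h | h
    · exact absurd (weight_zero h) hne
    · exact Or.inl h
    · exact Or.inr (Or.inl h)
    · exact Or.inr (Or.inr (Or.inl h))
    · exact Or.inr (Or.inr (Or.inr h))
  · exact ⟨golayRow 1, Submodule.subset_span ⟨1, rfl⟩, by decide, by decide⟩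
end

section
/- Every vector in the Leech lattice has squared Euclidean norm divisible by 16, and the minimal squared norm of a nonzero vector is 32. -/
/-! ### Auxiliary computational lemmas -/

def gr (i : Fin 12) (j : Fin 24) : ℕ := (golayRowsList.getD i.val []).getD j.val 0

def colSum (b0 b1 b2 b3 b4 b5 b6 b7 b8 b9 b10 b11 : Bool) (j : Fin 24) : ℕ :=
  (cond b0 (gr 0 j) 0) + (cond b1 (gr 1 j) 0) + (cond b2 (gr 2 j) 0) +
  (cond b3 (gr 3 j) 0) + (cond b4 (gr 4 j) 0) + (cond b5 (gr 5 j) 0) +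
  (cond b6 (gr 6 j) 0) + (cond b7 (gr 7 j) 0) + (cond b8 (gr 8 j) 0) +
  (cond b9 (gr 9 j) 0) + (cond b10 (gr 10 j) 0) + (cond b11 (gr 11 j) 0)

def wt (b0 b1 b2 b3 b4 b5 b6 b7 b8 b9 b10 b11 : Bool) : ℕ :=
  ∑ j : Fin 24, (colSum b0 b1 b2 b3 b4 b5 b6 b7 b8 b9 b10 b11 j) % 2

set_option maxHeartbeats 4000000 in
theorem golay_check : ∀ b0 b1 b2 b3 b4 b5 b6 b7 b8 b9 b10 b11 : Bool,
    (wt b0 b1 b2 b3 b4 b5 b6 b7 b8 b9 b10 b11) % 4 = 0 ∧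
    ((wt b0 b1 b2 b3 b4 b5 b6 b7 b8 b9 b10 b11) = 0 ∨
      8 ≤ (wt b0 b1 b2 b3 b4 b5 b6 b7 b8 b9 b10 b11)) := by decide

lemma sumNat12 (f : Fin 12 → ℕ) :
    ∑ i, f i = f 0 + (f 1 + (f 2 + (f 3 + (f 4 + (f 5 + (f 6 + (f 7 +
      (f 8 + (f 9 + (f 10 + f 11)))))))))) := rfl

lemma hc2 (z : ZMod 2) (k : Fin 12) (j : Fin 24) :
    z * golayRow k j = ((cond (decide (z = 1)) (gr k j) 0 : ℕ) : ZMod 2) := by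
  have hg : golayRow k j = ((gr k j : ℕ) : ZMod 2) := rfl
  rcases (show z = 0 ∨ z = 1 from by revert z; decide) with h | h <;> subst h
  · rw [zero_mul, show decide ((0 : ZMod 2) = 1) = false from by decide]
    simp
  · rw [one_mul, show decide ((1 : ZMod 2) = 1) = true from by decide, hg]
    rfl

lemma indicator_eq (m : ℕ) :
    (if ((m : ZMod 2) ≠ 0) then (1 : ℕ) else 0) = m % 2 := by
  have hdvd : ((m : ZMod 2) = 0) ↔ (2 : ℕ) ∣ m := ZMod.natCast_eq_zero_iff m 2
  rcases Nat.mod_two_eq_zero_or_one m with h | h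
  · rw [if_neg]
    · omega
    · simp only [ne_eq, not_not]
      exact hdvd.mpr (Nat.dvd_of_mod_eq_zero h)
  · rw [if_pos, h]
    intro h0
    have := hdvd.mp h0
    omega

lemma weight_eq (ε : Fin 12 → ZMod 2) :
    hWeight (∑ i, ε i • golayRow i) =
      wt (decide (ε 0 = 1)) (decide (ε 1 = 1)) (decide (ε 2 = 1)) (decide (ε 3 = 1))
         (decide (ε 4 = 1)) (decide (ε 5 = 1)) (decide (ε 6 = 1)) (decide (ε 7 = 1))
         (decide (ε 8 = 1)) (decide (ε 9 = 1)) (decide (ε 10 = 1)) (decide (ε 11 = 1)) := by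
  have key : ∀ j : Fin 24, (∑ i, ε i • golayRow i) j =
      ((colSum (decide (ε 0 = 1)) (decide (ε 1 = 1)) (decide (ε 2 = 1)) (decide (ε 3 = 1))
         (decide (ε 4 = 1)) (decide (ε 5 = 1)) (decide (ε 6 = 1)) (decide (ε 7 = 1))
         (decide (ε 8 = 1)) (decide (ε 9 = 1)) (decide (ε 10 = 1)) (decide (ε 11 = 1)) j : ℕ)
        : ZMod 2) := by
    intro j
    rw [Finset.sum_apply]
    calc ∑ i : Fin 12, (ε i • golayRow i) j
        = ∑ i : Fin 12, ((cond (decide (ε i = 1)) (gr i j) 0 : ℕ) : ZMod 2) :=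
          Finset.sum_congr rfl fun i _ => by rw [Pi.smul_apply, smul_eq_mul, hc2]
      _ = ((∑ i : Fin 12, cond (decide (ε i = 1)) (gr i j) 0 : ℕ) : ZMod 2) :=
          (Nat.cast_sum _ _).symm
      _ = _ := by
          refine congrArg _ ?_
          rw [sumNat12 (f := fun i => cond (decide (ε i = 1)) (gr i j) 0), colSum]
          ring
  unfold hWeight wt
  rw [Finset.card_filter]
  refine Finset.sum_congr rfl fun j _ => ?_
  rw [key j, indicator_eq]

lemma golay_weight {b : Fin 24 → ZMod 2} (hb : b ∈ GolayCode) :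
    4 ∣ hWeight b ∧ (hWeight b = 0 ∨ 8 ≤ hWeight b) := by
  rw [GolayCode, Submodule.mem_span_range_iff_exists_fun] at hb
  obtain ⟨ε, hε⟩ := hb
  rw [← hε, weight_eq]
  obtain ⟨h1, h2⟩ := golay_check (decide (ε 0 = 1)) (decide (ε 1 = 1)) (decide (ε 2 = 1))
    (decide (ε 3 = 1)) (decide (ε 4 = 1)) (decide (ε 5 = 1)) (decide (ε 6 = 1))
    (decide (ε 7 = 1)) (decide (ε 8 = 1)) (decide (ε 9 = 1)) (decide (ε 10 = 1))
    (decide (ε 11 = 1))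
  exact ⟨Nat.dvd_of_mod_eq_zero h1, h2⟩

lemma hWeight_eq_zero {b : Fin 24 → ZMod 2} (h : hWeight b = 0) : b = 0 := by
  funext j
  by_contra hj
  have hmem : j ∈ Finset.univ.filter fun j => b j ≠ 0 := by
    simp only [Finset.mem_filter, Finset.mem_univ, true_and]
    exact hj
  have := Finset.card_eq_zero.mp h
  rw [this] at hmem
  exact absurd hmem (Finset.notMem_empty j)

lemma val01 (z : ZMod 2) : (z.val : ℤ) = if z ≠ 0 then 1 else 0 := by
  revert z; decide

lemma sum_val_eq_weight (b : Fin 24 → ZMod 2) :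
    ∑ j : Fin 24, ((b j).val : ℤ) = (hWeight b : ℤ) := by
  unfold hWeight
  rw [Finset.card_filter]
  push_cast
  refine Finset.sum_congr rfl fun j _ => ?_
  rw [val01]

lemma sq_ge_one {z : ℤ} (h : z ≠ 0) : 1 ≤ z * z := by
  rcases h.lt_or_gt with h | h <;> nlinarith

lemma sq_ge_four {z : ℤ} (he : ∃ y, z = 2 * y ∧ y ≠ 0) : 4 ≤ z * z := by
  obtain ⟨y, rfl, hy⟩ := he
  have := sq_ge_one hy
  nlinarith

lemma val_le_one (z : ZMod 2) : z.val ≤ 1 := by revert z; decide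

lemma val_mul_self (z : ZMod 2) : ((z.val : ℤ)) * ((z.val : ℤ)) = (z.val : ℤ) := by
  revert z; decide

lemma fin2_cast_mul_self (t : Fin 2) : (((t : ℕ) : ℤ)) * (((t : ℕ) : ℤ)) = ((t : ℕ) : ℤ) := by
  revert t; decide

theorem leech_norms :
    (∀ x ∈ LeechLattice, (16 : ℤ) ∣ innerZ x x) ∧
    (∀ x ∈ LeechLattice, x ≠ 0 → 32 ≤ innerZ x x) ∧
    (∃ x ∈ LeechLattice, x ≠ 0 ∧ innerZ x x = 32) := by
  have div16 : ∀ x ∈ LeechLattice, (16 : ℤ) ∣ innerZ x x := by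
    intro x hx
    obtain ⟨a, b, hb, c, d, hpar, hxi⟩ := hx
    obtain ⟨k, hk⟩ := (golay_weight hb).1
    have hBsum := sum_val_eq_weight b
    fin_cases a
    · -- a = 0
      simp only [Fin.isValue, Fin.val_zero, Nat.cast_zero] at hpar hxi
      have hsq : ∀ i, x i * x i = 4 * ((b i).val : ℤ) +
          16 * (((c i : ℕ) : ℤ) * ((c i : ℕ) : ℤ) + 4 * d i * d i +
            ((b i).val : ℤ) * ((c i : ℕ) : ℤ) + 2 * ((b i).val : ℤ) * d i +
            4 * ((c i : ℕ) : ℤ) * d i) := by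
        intro i
        rw [hxi i]
        have hB := val_mul_self (b i)
        nlinarith [hB]
      have hsum : innerZ x x = 4 * (hWeight b : ℤ) + 16 * ∑ i, (((c i : ℕ) : ℤ) * ((c i : ℕ) : ℤ) + 4 * d i * d i +
            ((b i).val : ℤ) * ((c i : ℕ) : ℤ) + 2 * ((b i).val : ℤ) * d i +
            4 * ((c i : ℕ) : ℤ) * d i) := by
        unfold innerZ
        rw [Finset.sum_congr rfl fun i _ => hsq i, Finset.sum_add_distrib,
          ← Finset.mul_sum, ← Finset.mul_sum, hBsum]
      refine ⟨(k : ℤ) + ∑ i, (((c i : ℕ) : ℤ) * ((c i : ℕ) : ℤ) + 4 * d i * d i +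
            ((b i).val : ℤ) * ((c i : ℕ) : ℤ) + 2 * ((b i).val : ℤ) * d i +
            4 * ((c i : ℕ) : ℤ) * d i), ?_⟩
      rw [hsum, hk]
      push_cast
      ring
    · -- a = 1
      simp only [Fin.isValue, Fin.val_one, Nat.cast_one] at hpar hxi
      obtain ⟨m, hm⟩ : ∃ m : ℤ, ∑ i, ((c i : ℕ) : ℤ) = 2 * m + 1 :=
        ⟨(∑ i, ((c i : ℕ) : ℤ)) / 2, by omega⟩
      have hsq : ∀ i, x i * x i = 1 + 8 * ((b i).val : ℤ) + 8 * ((c i : ℕ) : ℤ) +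
          16 * (((c i : ℕ) : ℤ) * ((c i : ℕ) : ℤ) + 4 * d i * d i + d i +
            ((b i).val : ℤ) * ((c i : ℕ) : ℤ) + 2 * ((b i).val : ℤ) * d i +
            4 * ((c i : ℕ) : ℤ) * d i) := by
        intro i
        rw [hxi i]
        have hB := val_mul_self (b i)
        nlinarith [hB]
      have hsum : innerZ x x = 24 + 8 * (hWeight b : ℤ) + 8 * (∑ i, ((c i : ℕ) : ℤ)) +
          16 * ∑ i, (((c i : ℕ) : ℤ) * ((c i : ℕ) : ℤ) + 4 * d i * d i + d i +
            ((b i).val : ℤ) * ((c i : ℕ) : ℤ) + 2 * ((b i).val : ℤ) * d i +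
            4 * ((c i : ℕ) : ℤ) * d i) := by
        unfold innerZ
        rw [Finset.sum_congr rfl fun i _ => hsq i]
        rw [Finset.sum_add_distrib, Finset.sum_add_distrib, Finset.sum_add_distrib,
          ← Finset.mul_sum, ← Finset.mul_sum, ← Finset.mul_sum, hBsum]
        norm_num
      refine ⟨2 + 2 * (k : ℤ) + m +
        ∑ i, (((c i : ℕ) : ℤ) * ((c i : ℕ) : ℤ) + 4 * d i * d i + d i +
            ((b i).val : ℤ) * ((c i : ℕ) : ℤ) + 2 * ((b i).val : ℤ) * d i +
            4 * ((c i : ℕ) : ℤ) * d i), ?_⟩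
      rw [hsum, hk, hm]
      push_cast
      ring
  refine ⟨div16, ?_, ?_⟩
  · intro x hx hx0
    have hdvd := div16 x hx
    obtain ⟨a, b, hb, c, d, hpar, hxi⟩ := hx
    obtain ⟨hw4, hw08⟩ := golay_weight hb
    fin_cases a
    · -- a = 0
      simp only [Fin.isValue, Fin.val_zero, Nat.cast_zero] at hpar hxi
      by_cases hbz : b = 0
      · subst hbz
        have hz : ∀ i, x i = 4 * (((c i : ℕ) : ℤ) + 2 * d i) := by
          intro i
          rw [hxi i]
          simp only [Pi.zero_apply, ZMod.val_zero, Nat.cast_zero]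
          ring
        obtain ⟨i0, hi0⟩ := Function.ne_iff.mp hx0
        have hinner : innerZ x x = 16 * ∑ i, (((c i : ℕ) : ℤ) + 2 * d i) * (((c i : ℕ) : ℤ) + 2 * d i) := by
          unfold innerZ
          rw [Finset.sum_congr rfl fun i _ => show x i * x i =
            16 * ((((c i : ℕ) : ℤ) + 2 * d i) * (((c i : ℕ) : ℤ) + 2 * d i)) from by
              rw [hz i]; ring, ← Finset.mul_sum]
        have hstep : ∑ i, (((c i : ℕ) : ℤ) + 2 * d i) * (((c i : ℕ) : ℤ) + 2 * d i) =
            (∑ i, ((c i : ℕ) : ℤ)) + 2 * ∑ i, (2 * ((c i : ℕ) : ℤ) * d i + 2 * d i * d i) := by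
          rw [Finset.mul_sum, ← Finset.sum_add_distrib]
          refine Finset.sum_congr rfl fun i _ => ?_
          linear_combination fin2_cast_mul_self (c i)
        have heven : (2:ℤ) ∣ ∑ i, (((c i : ℕ) : ℤ) + 2 * d i) * (((c i : ℕ) : ℤ) + 2 * d i) := by
          rw [hstep]
          exact dvd_add (Int.dvd_of_emod_eq_zero hpar) (Dvd.intro _ rfl)
        have hz0 : (((c i0 : ℕ) : ℤ) + 2 * d i0) ≠ 0 := by
          intro h0
          apply hi0
          rw [hz i0, h0]
          simp
        have hpos : 1 ≤ ∑ i, (((c i : ℕ) : ℤ) + 2 * d i) * (((c i : ℕ) : ℤ) + 2 * d i) := by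
          calc (1:ℤ) ≤ (((c i0 : ℕ) : ℤ) + 2 * d i0) * (((c i0 : ℕ) : ℤ) + 2 * d i0) :=
              sq_ge_one hz0
            _ ≤ _ := Finset.single_le_sum (f := fun i => (((c i : ℕ) : ℤ) + 2 * d i) * (((c i : ℕ) : ℤ) + 2 * d i))
                (fun i _ => mul_self_nonneg _) (Finset.mem_univ i0)
        obtain ⟨t, ht⟩ := heven
        rw [hinner]
        omega
      · have hw8 : 8 ≤ hWeight b := by
          rcases hw08 with h | h
          · exact absurd (hWeight_eq_zero h) hbz
          · exact h
        have hterm : ∀ j ∈ Finset.univ.filter fun j => b j ≠ 0, (4:ℤ) ≤ x j * x j := by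
          intro j hj
          have hbj : (b j).val = 1 := by
            have hb0 : b j ≠ 0 := (Finset.mem_filter.mp hj).2
            have h01 : ∀ z : ZMod 2, z ≠ 0 → z.val = 1 := by decide
            exact h01 _ hb0
          apply sq_ge_four
          refine ⟨1 + 2 * ((c j : ℕ) : ℤ) + 4 * d j, ?_, ?_⟩
          · rw [hxi j, hbj]
            push_cast
            ring
          · omega
        have h1 : 4 * ((Finset.univ.filter fun j => b j ≠ 0).card : ℤ) ≤
            ∑ j ∈ Finset.univ.filter (fun j => b j ≠ 0), x j * x j := by
          calc 4 * ((Finset.univ.filter fun j => b j ≠ 0).card : ℤ)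
              = ∑ _j ∈ Finset.univ.filter (fun j => b j ≠ 0), (4:ℤ) := by
                rw [Finset.sum_const, nsmul_eq_mul]; ring
            _ ≤ _ := Finset.sum_le_sum hterm
        have h2 : ∑ j ∈ Finset.univ.filter (fun j => b j ≠ 0), x j * x j ≤ innerZ x x :=
          Finset.sum_le_sum_of_subset_of_nonneg (Finset.subset_univ _)
            (fun i _ _ => mul_self_nonneg _)
        have h3 : (8:ℤ) ≤ ((Finset.univ.filter fun j => b j ≠ 0).card : ℤ) := by
          exact_mod_cast hw8
        linarith
    · -- a = 1
      simp only [Fin.isValue, Fin.val_one, Nat.cast_one] at hpar hxi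
      have h1 : ∀ i, 1 ≤ x i * x i := by
        intro i
        apply sq_ge_one
        rw [hxi i]
        omega
      have h24 : (24:ℤ) ≤ innerZ x x := by
        unfold innerZ
        calc (24:ℤ) = ∑ _i : Fin 24, (1:ℤ) := by simp
          _ ≤ ∑ i, x i * x i := Finset.sum_le_sum fun i _ => h1 i
      obtain ⟨u, hu⟩ := hdvd
      omega
  · refine ⟨(fun i => if i.val < 2 then (4:ℤ) else 0),
      ⟨0, 0, Submodule.zero_mem _, (fun i => if i.val < 2 then 1 else 0), 0, ?_, ?_⟩, ?_, ?_⟩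
    · decide
    · intro i
      by_cases h : i.val < 2 <;> simp [h]
    · intro h
      have := congrFun h ⟨0, by norm_num⟩
      simp at this
    · decide
end

section
/- There do not exist 25 vectors of squared norm 48 in the Leech lattice with all pairwise inner products equal to −2; in fact, no two Leech lattice vectors of squared norm 48 have inner product −2. -/
lemma golay_sum_zero : ∀ b ∈ GolayCode, (∑ i, b i) = 0 := by
  intro b hb
  let L : (Fin 24 → ZMod 2) →ₗ[ZMod 2] ZMod 2 := ∑ i, LinearMap.proj i
  have hL : ∀ x, L x = ∑ i, x i := by
    intro x; simp [L, LinearMap.sum_apply]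
  have : GolayCode ≤ LinearMap.ker L := by
    rw [GolayCode, Submodule.span_le]
    rintro _ ⟨i, rfl⟩
    simp only [SetLike.mem_coe, LinearMap.mem_ker, hL]
    fin_cases i <;> decide
  have := this hb
  rw [LinearMap.mem_ker, hL] at this
  exact this

lemma golay_weight_even (b : Fin 24 → ZMod 2) (hb : b ∈ GolayCode) :
    ∃ m : ℤ, (∑ i, ((b i).val : ℤ)) = 2 * m := by
  have h1 : ((∑ i, (b i).val : ℕ) : ZMod 2) = 0 := by
    push_cast
    simp only [ZMod.natCast_val, ZMod.cast_id]
    exact golay_sum_zero b hb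
  rw [ZMod.natCast_eq_zero_iff] at h1
  obtain ⟨m, hm⟩ := h1
  refine ⟨(m : ℤ), ?_⟩
  have h3 : (∑ i, ((b i).val : ℤ)) = ((∑ i, (b i).val : ℕ) : ℤ) := by
    push_cast; rfl
  rw [h3, hm]; push_cast; ring

lemma leech_inner_div4 (u v : Fin 24 → ℤ) (hu : u ∈ LeechLattice) (hv : v ∈ LeechLattice) :
    (4 : ℤ) ∣ innerZ u v := by
  obtain ⟨a, b, hb, c, d, -, hu⟩ := hu
  obtain ⟨a', b', hb', c', d', -, hv⟩ := hv
  obtain ⟨m, hm⟩ := golay_weight_even b hb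
  obtain ⟨m', hm'⟩ := golay_weight_even b' hb'
  set R : Fin 24 → ℤ := fun i =>
    ((b i).val : ℤ) * ((b' i).val : ℤ)
    + ((a : ℤ) + 2 * ((b i).val : ℤ)) * (((c' i : ℕ) : ℤ) + 2 * d' i)
    + ((a' : ℤ) + 2 * ((b' i).val : ℤ)) * (((c i : ℕ) : ℤ) + 2 * d i)
    + 4 * (((c i : ℕ) : ℤ) + 2 * d i) * (((c' i : ℕ) : ℤ) + 2 * d' i) with hR
  refine ⟨6 * (a : ℤ) * (a' : ℤ) + (a : ℤ) * m' + (a' : ℤ) * m + ∑ i, R i, ?_⟩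
  have step : innerZ u v = ∑ i, ((a : ℤ) * (a' : ℤ) + 2 * (a : ℤ) * ((b' i).val : ℤ)
      + 2 * (a' : ℤ) * ((b i).val : ℤ) + 4 * R i) := by
    refine Finset.sum_congr rfl fun i _ => ?_
    rw [hu i, hv i, hR]; ring
  rw [step]
  rw [Finset.sum_add_distrib, Finset.sum_add_distrib, Finset.sum_add_distrib,
    Finset.sum_const, ← Finset.mul_sum, ← Finset.mul_sum, ← Finset.mul_sum, hm, hm']
  simp [Finset.card_univ]
  ring

theorem no_simplex_of_norm48 :
    (∀ u ∈ LeechLattice, ∀ v ∈ LeechLattice,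
      innerZ u u = 48 → innerZ v v = 48 → innerZ u v ≠ -2) ∧
    ¬∃ f : Fin 25 → (Fin 24 → ℤ),
      (∀ i, f i ∈ LeechLattice ∧ innerZ (f i) (f i) = 48) ∧
      (∀ i j, i ≠ j → innerZ (f i) (f j) = -2) := by
  have key : ∀ u ∈ LeechLattice, ∀ v ∈ LeechLattice, innerZ u v ≠ -2 := by
    intro u hu v hv h
    obtain ⟨k, hk⟩ := leech_inner_div4 u v hu hv
    omega
  refine ⟨fun u hu v hv _ _ => key u hu v hv, ?_⟩
  rintro ⟨f, hf, hij⟩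
  exact key _ (hf 0).1 _ (hf 1).1 (hij 0 1 (by decide))
end

section
/- The set M_4 of minimal vectors of the sublattice Λ_4 ≅ D_4 (scaled) of the Leech lattice, namely minimal Leech vectors supported on the first 4 coordinates, has exactly 24 elements, all of shape (±4, ±4, 0, 0), and can be partitioned into 5 parts each of diameter strictly less than √96. -/
def M4 : Set (Fin 24 → ℤ) := {x ∈ LeechM | ∀ i : Fin 24, 4 ≤ (i : ℕ) → x i = 0}

def Lcomb (t : Fin 12 → ZMod 2) : Fin 24 → ZMod 2 :=
  ∑ i : Fin 12, t i • golayRow i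

def tfour (t0 t1 t2 t3 : ZMod 2) : Fin 12 → ZMod 2 := fun i =>
  if i.val = 0 then t0 else if i.val = 1 then t1 else if i.val = 2 then t2
  else if i.val = 3 then t3 else 0

set_option maxHeartbeats 2000000 in
lemma golay_key4 : ∀ t0 t1 t2 t3 : ZMod 2,
    (∀ j : Fin 24, 12 ≤ j.val → Lcomb (tfour t0 t1 t2 t3) j = 0) →
    t0 = 0 ∧ t1 = 0 ∧ t2 = 0 ∧ t3 = 0 := by decide

def restr (b : Fin 24 → ZMod 2) : Fin 12 → ZMod 2 := fun i => b ⟨i.val, by omega⟩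

set_option maxHeartbeats 2000000 in
lemma Lcomb_row : ∀ i : Fin 12, Lcomb (restr (golayRow i)) = golayRow i := by decide

lemma Lcomb_id (b : Fin 24 → ZMod 2) (hb : b ∈ GolayCode) : Lcomb (restr b) = b := by
  induction hb using Submodule.span_induction with
  | mem x hx => obtain ⟨i, rfl⟩ := hx; exact Lcomb_row i
  | zero => simp [Lcomb, restr]
  | add x y _ _ hx hy =>
      have : restr (x + y) = restr x + restr y := rfl
      simp only [Lcomb, this, Pi.add_apply, add_smul, Finset.sum_add_distrib]
      rw [show (∑ i : Fin 12, restr x i • golayRow i) = Lcomb (restr x) from rfl,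
          show (∑ i : Fin 12, restr y i • golayRow i) = Lcomb (restr y) from rfl, hx, hy]
  | smul a x _ hx =>
      have : restr (a • x) = a • restr x := rfl
      simp only [Lcomb, this, Pi.smul_apply, smul_assoc, ← Finset.smul_sum]
      rw [show (∑ i : Fin 12, restr x i • golayRow i) = Lcomb (restr x) from rfl, hx]

lemma golay_supported (b : Fin 24 → ZMod 2) (hb : b ∈ GolayCode)
    (h : ∀ j : Fin 24, 4 ≤ j.val → b j = 0) : b = 0 := by
  have hL : Lcomb (restr b) = b := Lcomb_id b hb
  have hre : restr b = tfour (b ⟨0, by omega⟩) (b ⟨1, by omega⟩) (b ⟨2, by omega⟩) (b ⟨3, by omega⟩) := by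
    funext i
    fin_cases i <;> simp [restr, tfour] <;> exact h _ (by decide)
  have hkey := golay_key4 (b ⟨0, by omega⟩) (b ⟨1, by omega⟩) (b ⟨2, by omega⟩) (b ⟨3, by omega⟩)
    (by intro j hj; rw [← hre, hL]; exact h j (by omega))
  obtain ⟨h0, h1, h2, h3⟩ := hkey
  rw [← hL, hre, h0, h1, h2, h3]
  have : tfour 0 0 0 0 = 0 := by decide
  rw [this]
  simp [Lcomb]

def V (p q : Fin 24) (s t : ℤ) : Fin 24 → ℤ := fun i => if i = p then s else if i = q then t else 0

lemma innerZ_VV (p q : Fin 24) (hpq : p ≠ q) (s t : ℤ) :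
    innerZ (V p q s t) (V p q s t) = s * s + t * t := by
  have hpt : ∀ j : Fin 24, V p q s t j * V p q s t j =
      (if j = p then s * s else 0) + (if j = q then t * t else 0) := by
    intro j; unfold V
    split_ifs with h1 h2 <;>
      first | (exact absurd (h1.symm.trans h2) hpq) | ring
  unfold innerZ
  simp only [hpt]
  rw [Finset.sum_add_distrib]
  simp

lemma V_mem (p q : Fin 24) (hp : p.val < 4) (hq : q.val < 4) (hpq : p ≠ q)
    (s t : ℤ) (hs : s = 4 ∨ s = -4) (ht : t = 4 ∨ t = -4) : V p q s t ∈ M4 := by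
  refine ⟨⟨?_, ?_⟩, ?_⟩
  · refine ⟨0, 0, zero_mem _, fun i => if i = p then 1 else if i = q then 1 else 0,
      fun i => if i = p then (s - 4) / 8 else if i = q then (t - 4) / 8 else 0, ?_, ?_⟩
    · have h : ∀ i : Fin 24,
          (((if i = p then (1 : Fin 2) else if i = q then 1 else 0) : Fin 2).val : ℤ) =
          (if i = p then (1 : ℤ) else 0) + (if i = q then (1 : ℤ) else 0) := by
        intro i; split_ifs with h1 h2 <;>
          first | (exact absurd (h1.symm.trans h2) hpq) | rfl
      simp only [h]
      rw [Finset.sum_add_distrib]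
      simp
    · rcases hs with rfl | rfl <;> rcases ht with rfl | rfl <;> intro i <;>
        by_cases h1 : i = p <;> by_cases h2 : i = q <;>
          simp_all [V, show (((1:Fin 2):ℕ):ℤ) = 1 from rfl, show (((0:Fin 2):ℕ):ℤ) = 0 from rfl]
  · rw [innerZ_VV p q hpq]
    rcases hs with rfl | rfl <;> rcases ht with rfl | rfl <;> norm_num
  · intro i hi
    have h1 : i ≠ p := fun h => by omega
    have h2 : i ≠ q := fun h => by omega
    simp [V, h1, h2]

lemma mem_helper : ∀ j : Fin 24, j ≠ 0 → j ≠ 1 → j ≠ 2 → j ≠ 3 → 4 ≤ j.val := by decide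

lemma innerZ_four (g : Fin 24 → ℤ) (hz : ∀ j : Fin 24, 4 ≤ j.val → g j = 0) :
    innerZ g g = g 0 * g 0 + g 1 * g 1 + g 2 * g 2 + g 3 * g 3 := by
  unfold innerZ
  rw [← Finset.sum_subset (Finset.subset_univ ({0,1,2,3} : Finset (Fin 24)))
      (fun j _ hj => ?_)]
  · rw [show ({0,1,2,3} : Finset (Fin 24)) = insert 0 (insert 1 (insert 2 {3})) from rfl,
      Finset.sum_insert (by decide), Finset.sum_insert (by decide),
      Finset.sum_insert (by decide), Finset.sum_singleton]; ring
  · have h4 : ∀ j : Fin 24, j ∉ ({0,1,2,3} : Finset (Fin 24)) → 4 ≤ j.val := by decide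
    rw [hz j (h4 j hj)]; ring

lemma opts (A : ℤ) (cc : Fin 2) (dd : ℤ) (hA : A = 4 * (cc.val : ℤ) + 8 * dd)
    (hbd : A * A ≤ 32) : A = -4 ∨ A = 0 ∨ A = 4 := by
  have h1 : A ≤ 5 := by nlinarith
  have h2 : -5 ≤ A := by nlinarith
  have := cc.isLt
  omega

def vlist : List (Fin 24 → ℤ) :=
  [V 0 1 4 4, V 0 1 4 (-4), V 0 1 (-4) 4, V 0 1 (-4) (-4),
   V 0 2 4 4, V 0 2 4 (-4), V 0 2 (-4) 4, V 0 2 (-4) (-4),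
   V 0 3 4 4, V 0 3 4 (-4), V 0 3 (-4) 4, V 0 3 (-4) (-4),
   V 1 2 4 4, V 1 2 4 (-4), V 1 2 (-4) 4, V 1 2 (-4) (-4),
   V 1 3 4 4, V 1 3 4 (-4), V 1 3 (-4) 4, V 1 3 (-4) (-4),
   V 2 3 4 4, V 2 3 4 (-4), V 2 3 (-4) 4, V 2 3 (-4) (-4)]

lemma M4_subset (x : Fin 24 → ℤ) (hx : x ∈ M4) : x ∈ vlist.toFinset := by
  obtain ⟨⟨⟨a, b, hb, c, d, hpar, hxe⟩, hnorm⟩, hzero⟩ := hx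
  -- a = 0
  have ha4 := hxe 4
  rw [hzero 4 (by decide)] at ha4
  have hav : a.val < 2 := a.isLt
  have hbv4 : (b 4).val < 2 := ZMod.val_lt _
  have hcv4 : (c 4).val < 2 := (c 4).isLt
  have ha : (a.val : ℤ) = 0 := by omega
  -- b = 0
  have hb0 : b = 0 := by
    apply golay_supported b hb
    intro j hj
    have he := hxe j
    rw [hzero j hj] at he
    have hbvj : (b j).val < 2 := ZMod.val_lt _
    have hcvj : (c j).val < 2 := (c j).isLt
    have : (b j).val = 0 := by omega
    exact (ZMod.val_eq_zero _).mp this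
  subst hb0
  simp only [Pi.zero_apply, ZMod.val_zero, Nat.cast_zero, mul_zero, add_zero, zero_add] at hxe
  -- coordinate equations
  have hxe' : ∀ i : Fin 24, x i = 4 * ((c i).val : ℤ) + 8 * d i := by
    intro i; have := hxe i; omega
  have hsum32 : x 0 * x 0 + x 1 * x 1 + x 2 * x 2 + x 3 * x 3 = 32 := by
    rw [← innerZ_four x hzero]; exact hnorm
  have hx0 : x 0 = -4 ∨ x 0 = 0 ∨ x 0 = 4 := opts _ (c 0) (d 0) (hxe' 0)
    (by nlinarith [mul_self_nonneg (x 1), mul_self_nonneg (x 2), mul_self_nonneg (x 3)])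
  have hx1 : x 1 = -4 ∨ x 1 = 0 ∨ x 1 = 4 := opts _ (c 1) (d 1) (hxe' 1)
    (by nlinarith [mul_self_nonneg (x 0), mul_self_nonneg (x 2), mul_self_nonneg (x 3)])
  have hx2 : x 2 = -4 ∨ x 2 = 0 ∨ x 2 = 4 := opts _ (c 2) (d 2) (hxe' 2)
    (by nlinarith [mul_self_nonneg (x 0), mul_self_nonneg (x 1), mul_self_nonneg (x 3)])
  have hx3 : x 3 = -4 ∨ x 3 = 0 ∨ x 3 = 4 := opts _ (c 3) (d 3) (hxe' 3)
    (by nlinarith [mul_self_nonneg (x 0), mul_self_nonneg (x 1), mul_self_nonneg (x 2)])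
  have hrep : x = fun j : Fin 24 => if j = 0 then x 0 else if j = 1 then x 1
      else if j = 2 then x 2 else if j = 3 then x 3 else 0 := by
    funext j
    split_ifs with h0 h1 h2 h3
    · rw [h0]
    · rw [h1]
    · rw [h2]
    · rw [h3]
    · exact hzero j (mem_helper j h0 h1 h2 h3)
  rw [hrep]
  rcases hx0 with h0 | h0 | h0 <;> rcases hx1 with h1 | h1 | h1 <;>
    rcases hx2 with h2 | h2 | h2 <;> rcases hx3 with h3 | h3 | h3 <;>
    rw [h0, h1, h2, h3] at hsum32 ⊢ <;>
    first
      | (exfalso; norm_num at hsum32; done)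
      | decide

def colL : List (Fin 5) := [0, 0, 1, 2, 0, 0, 1, 2, 0, 0, 1, 3, 1, 3, 4, 2, 1, 3, 2, 4, 1, 4, 2, 3]

def colf : (Fin 24 → ℤ) → Fin 5 := fun x => colL.getD (vlist.idxOf x) 0

lemma M4_eq : M4 = ↑vlist.toFinset := by
  apply Set.Subset.antisymm
  · exact fun x hx => M4_subset x hx
  · intro x hx
    have hx' : x ∈ vlist.toFinset := hx
    fin_cases hx' <;>
      exact V_mem _ _ (by decide) (by decide) (by decide) _ _
        (by norm_num) (by norm_num)

set_option maxHeartbeats 4000000 in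
lemma key_decide : ∀ x ∈ vlist.toFinset, ∀ y ∈ vlist.toFinset,
    colf x = colf y → innerZ (x - y) (x - y) < 96 := by decide

theorem M4_props :
    Nat.card M4 = 24 ∧
    (∀ x ∈ M4, Shape3 x) ∧
    (∃ f : (Fin 24 → ℤ) → Fin 5,
      ∀ x ∈ M4, ∀ y ∈ M4, f x = f y → innerZ (x - y) (x - y) < 96) := by
  refine ⟨?_, ?_, ⟨colf, ?_⟩⟩
  · rw [M4_eq, Nat.card_coe_set_eq, Set.ncard_coe_finset]
    decide
  · intro x hx
    rw [M4_eq] at hx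
    have hx' : x ∈ vlist.toFinset := hx
    fin_cases hx' <;>
      exact ⟨_, _, by decide, _, _, by norm_num, by norm_num, fun i => rfl⟩
  · intro x hx y hy
    rw [M4_eq] at hx hy
    exact key_decide x hx y hy
end
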